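/- Let n ≥ 1 and let a₁, …, a_n ∈ ℂ be such that Σ_{i∈T} a_i ≠ 0 for every nonempty subset T ⊆ {1, …, n}, and let A ⊆ ℂ[z₁, …, z_n] be the ℂ-subalgebra generated by p_m = a₁ z₁^m + … + a_n z_n^m for all m ≥ 1. Then every ℂ-subalgebra B with A ⊆ B ⊆ ℂ[z₁, …, z_n] is a finitely generated ℂ-algebra and an integral domain; in particular A itself is a finitely generated ℂ-algebra and an integral domain. -/

import Mathlib

/-!
Write `I = (p₁, …, pₙ)`. A common zero `x` of `I` is `0`: if some `xᵢ ≠ 0`, a polynomial `P`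
with `P(0) = 0`, of degree `≤ n`, vanishing at every value of `x` except `v = xᵢ` gives
`0 = Σⱼ aⱼ P(xⱼ) = (Σ_{xⱼ = v} aⱼ) P(v)`, contradicting the hypothesis on the `aⱼ`. By the
Nullstellensatz some power `zᵢ^N` lies in `I`, and since the `pₘ` are homogeneous of positive
degree, `zᵢ^N = Σₘ gₘ pₘ` with `deg gₘ < N`. Induction on the degree then shows that `ℂ[z]` is
spanned over `B` by the finitely many monomials with all exponents `≤ N`, so the Artin–Tate lemma
makes `B` a finitely generated `ℂ`-algebra; it is a domain as a subring of `ℂ[z]`.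
-/

section PowerSums

open Finset Polynomial

variable {R ι : Type*} [CommRing R] [Fintype ι] {a x : ι → R}

theorem Polynomial.sum_mul_eval_eq_zero_of_sum_mul_pow_eq_zero {n : ℕ}
    (h : ∀ m, 1 ≤ m → m ≤ n → ∑ i, a i * x i ^ m = 0)
    {P : R[X]} (hP0 : P.coeff 0 = 0) (hPn : P.natDegree ≤ n) :
    ∑ i, a i * P.eval (x i) = 0 := by
  simp_rw [eval_eq_sum_range' (Nat.lt_succ_of_le hPn), mul_sum]
  rw [sum_comm]
  refine sum_eq_zero fun m hm => ?_
  rcases Nat.eq_zero_or_pos m with rfl | hm0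
  · simp [hP0]
  · calc ∑ i, a i * (P.coeff m * x i ^ m) = P.coeff m * ∑ i, a i * x i ^ m := by
          rw [mul_sum]; exact sum_congr rfl fun i _ => by ring
      _ = 0 := by rw [h m hm0 (Nat.lt_succ_iff.1 (mem_range.1 hm)), mul_zero]

theorem eq_zero_of_forall_sum_mul_pow_eq_zero [IsDomain R]
    (ha : ∀ T : Finset ι, T.Nonempty → ∑ i ∈ T, a i ≠ 0)
    (h : ∀ m, 1 ≤ m → m ≤ Fintype.card ι → ∑ i, a i * x i ^ m = 0) : x = 0 := by
  classical
  by_contra hx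
  obtain ⟨i₀, hi₀⟩ : ∃ i, x i ≠ 0 := Function.ne_iff.1 hx
  -- `P` kills `0` and every value of `x` except `x i₀`, where it does not vanish.
  set P : R[X] := X * ∏ v ∈ (univ.image x).erase (x i₀), (X - C v)
  have hP0 : P.coeff 0 = 0 := by simp [P]
  have hPn : P.natDegree ≤ Fintype.card ι := by
    have hx₀ : x i₀ ∈ univ.image x := mem_image_of_mem x (mem_univ i₀)
    have := card_image_le (s := univ) (f := x)
    have := card_pos.2 ⟨_, hx₀⟩
    calc P.natDegree ≤ 1 + ((univ.image x).erase (x i₀)).card := by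
          refine (natDegree_mul_le).trans (add_le_add natDegree_X_le ?_)
          rw [natDegree_finsetProd_X_sub_C_eq_card]
      _ ≤ Fintype.card ι := by rw [card_erase_of_mem hx₀, ← card_univ]; omega
  have hsum :
      ∑ i, a i * P.eval (x i) = (∑ i ∈ univ.filter (x · = x i₀), a i) * P.eval (x i₀) := by
    rw [sum_mul, sum_filter]
    refine sum_congr rfl fun i _ => ?_
    split_ifs with hi
    · rw [hi]
    · rw [eval_mul, eval_prod, prod_eq_zero (i := x i) ?_ (by simp), mul_zero, mul_zero]
      exact mem_erase.2 ⟨hi, mem_image_of_mem x (mem_univ i)⟩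
  have hPx₀ : P.eval (x i₀) ≠ 0 := by
    rw [eval_mul, eval_prod]
    refine mul_ne_zero (by simpa using hi₀) (prod_ne_zero_iff.2 fun v hv => ?_)
    simpa [sub_eq_zero, eq_comm] using ne_of_mem_erase hv
  refine ha (univ.filter (x · = x i₀)) ⟨i₀, by simp⟩ ?_
  have hzero := sum_mul_eval_eq_zero_of_sum_mul_pow_eq_zero h hP0 hPn
  exact (mul_eq_zero.1 (hsum ▸ hzero)).resolve_right hPx₀

end PowerSums

theorem Subalgebra.finiteType_of_finite {R S : Type*} [CommRing R] [IsNoetherianRing R]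
    [CommRing S] [Algebra R S] [Algebra.FiniteType R S] (B : Subalgebra R S)
    [Module.Finite B S] : Algebra.FiniteType R B :=
  ⟨fg_of_fg_of_fg R B S Algebra.FiniteType.out Module.Finite.fg_top Subtype.val_injective⟩

namespace MvPolynomial

open Finset

variable {σ R : Type*} [CommRing R]

attribute [local instance] gradedAlgebra in
theorem homogeneousComponent_mul_of_isHomogeneous {g Q : MvPolynomial σ R} {m n : ℕ}
    (hQ : Q.IsHomogeneous m) (hmn : m ≤ n) :
    homogeneousComponent n (g * Q) = homogeneousComponent (n - m) g * Q := by
  simp only [← decomposition.decompose'_apply]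
  exact DirectSum.coe_decompose_mul_of_right_mem_of_le (homogeneousSubmodule σ R)
    ((mem_homogeneousSubmodule m Q).2 hQ) hmn

theorem exists_isHomogeneous_sum_mul_eq {ι : Type*} [Fintype ι] {q : ι → MvPolynomial σ R}
    {d : ι → ℕ} (hq : ∀ j, (q j).IsHomogeneous (d j)) {f : MvPolynomial σ R} {D : ℕ}
    (hf : f.IsHomogeneous D) (hdD : ∀ j, d j ≤ D) (hfq : f ∈ Ideal.span (Set.range q)) :
    ∃ g : ι → MvPolynomial σ R, (∀ j, (g j).IsHomogeneous (D - d j)) ∧ f = ∑ j, g j * q j := by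
  obtain ⟨g, rfl⟩ := Ideal.mem_span_range_iff_exists_fun.1 hfq
  refine ⟨fun j => homogeneousComponent (D - d j) (g j),
    fun j => homogeneousComponent_isHomogeneous _ _, ?_⟩
  rw [← homogeneousComponent_eq_self hf, map_sum]
  exact sum_congr rfl fun j _ => homogeneousComponent_mul_of_isHomogeneous (hq j) (hdD j)

variable [Fintype σ] {ι : Type*} [Fintype ι]

theorem span_monomial_Iic_eq_top (B : Subalgebra R (MvPolynomial σ R))
    {q : ι → MvPolynomial σ R} {d : ι → ℕ} (hq : ∀ j, (q j).IsHomogeneous (d j))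
    (hd : ∀ j, 0 < d j) (hqB : ∀ j, q j ∈ B) {N : ℕ} (hdN : ∀ j, d j ≤ N)
    (hXN : ∀ i, X i ^ N ∈ Ideal.span (Set.range q)) :
    Submodule.span B
      ((monomial · (1 : R)) '' Set.Iic (Finsupp.equivFunOnFinite.symm fun _ : σ => N)) = ⊤ := by
  choose g hg hXg using fun i =>
    exists_isHomogeneous_sum_mul_eq hq (isHomogeneous_X_pow i N) hdN (hXN i)
  set M := Submodule.span B
    ((monomial · (1 : R)) '' Set.Iic (Finsupp.equivFunOnFinite.symm fun _ : σ => N))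
  have mem_of_totalDegree_lt : ∀ D, (∀ s : σ →₀ ℕ, s.degree < D → monomial s 1 ∈ M) →
      ∀ f : MvPolynomial σ R, f.totalDegree < D → f ∈ M := by
    intro D hD f hf
    rw [f.as_sum]
    refine sum_mem fun s hs => ?_
    rw [← mul_one (coeff s f), ← smul_eq_mul, ← smul_monomial]
    exact Submodule.smul_of_tower_mem _ _ (hD s ((le_totalDegree hs).trans_lt hf))
  have monomial_mem : ∀ D, ∀ s : σ →₀ ℕ, s.degree = D → monomial s (1 : R) ∈ M := by
    intro D
    induction D using Nat.strong_induction_on with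
    | _ D IH =>
    intro s hsD
    by_cases hs : s ≤ Finsupp.equivFunOnFinite.symm fun _ : σ => N
    · exact Submodule.subset_span ⟨s, hs, rfl⟩
    obtain ⟨i, hi⟩ : ∃ i, N < s i := by simpa [Finsupp.le_def] using hs
    set t := s - Finsupp.single i N
    have hts : s = t + Finsupp.single i N := by
      ext k
      by_cases hk : k = i <;> simp [t, hk]; omega
    have hexpand : monomial s (1 : R) = ∑ j, q j * (monomial t 1 * g i j) := by
      have hsplit : monomial s (1 : R) = monomial t 1 * X i ^ N := by
        rw [X_pow_eq_monomial, monomial_mul, ← hts, mul_one]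
      rw [hsplit, hXg i, mul_sum]
      exact sum_congr rfl fun j _ => by ring
    rw [hexpand]
    refine sum_mem fun j _ => ?_
    have hqj : q j * (monomial t 1 * g i j) = (⟨q j, hqB j⟩ : B) • (monomial t 1 * g i j) := rfl
    rw [hqj]
    refine Submodule.smul_mem _ _ (mem_of_totalDegree_lt D (fun u hu => IH _ hu u rfl) _ ?_)
    have hdeg : s.degree = t.degree + N := by rw [hts, map_add, Finsupp.degree_single]
    calc (monomial t (1 : R) * g i j).totalDegree
        ≤ (monomial t (1 : R)).totalDegree + (g i j).totalDegree := totalDegree_mul _ _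
      _ ≤ t.degree + (N - d j) :=
          add_le_add (totalDegree_monomial_le t 1) (hg i j).totalDegree_le
      _ < D := by have := hd j; have := hdN j; omega
  exact eq_top_iff.2 fun f _ =>
    mem_of_totalDegree_lt _ (fun s _ => monomial_mem _ s rfl) f f.totalDegree.lt_succ_self

theorem module_finite_of_X_mem_radical (B : Subalgebra R (MvPolynomial σ R))
    {q : ι → MvPolynomial σ R} {d : ι → ℕ} (hq : ∀ j, (q j).IsHomogeneous (d j))
    (hd : ∀ j, 0 < d j) (hqB : ∀ j, q j ∈ B)
    (hX : ∀ i, X i ∈ (Ideal.span (Set.range q)).radical) :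
    Module.Finite B (MvPolynomial σ R) := by
  classical
  obtain ⟨k, hk⟩ := Ideal.exists_pow_le_of_le_radical_of_fg
    (Ideal.span_le.2 (Set.range_subset_iff.2 hX)) (Submodule.fg_span (Set.finite_range X))
  have hXN : ∀ i, X i ^ (k + ∑ j, d j) ∈ Ideal.span (Set.range q) := fun i =>
    Ideal.pow_mem_of_pow_mem _
      (hk (Ideal.pow_mem_pow (Ideal.subset_span (Set.mem_range_self i)) k)) (Nat.le_add_right _ _)
  have hdN : ∀ j, d j ≤ k + ∑ j, d j := fun j =>
    (single_le_sum (fun j _ => Nat.zero_le (d j)) (mem_univ j)).trans (Nat.le_add_left _ _)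
  exact ⟨Submodule.fg_def.2 ⟨_, (Set.finite_Iic _).image _,
    span_monomial_Iic_eq_top B hq hd hqB hdN hXN⟩⟩

noncomputable def weightedPowerSum (a : σ → R) (m : ℕ) : MvPolynomial σ R :=
  ∑ i, C (a i) * X i ^ m

theorem isHomogeneous_weightedPowerSum (a : σ → R) (m : ℕ) :
    (weightedPowerSum a m).IsHomogeneous m :=
  IsHomogeneous.sum _ _ _ fun _ _ => isHomogeneous_C_mul_X_pow _ _ _

theorem X_mem_radical_span_weightedPowerSum {K : Type*} [Field K] [IsAlgClosed K] {a : σ → K}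
    (ha : ∀ T : Finset σ, T.Nonempty → ∑ i ∈ T, a i ≠ 0) (i : σ) :
    X i ∈ (Ideal.span (Set.range fun j : Fin (Fintype.card σ) =>
      weightedPowerSum a (j + 1))).radical := by
  rw [← vanishingIdeal_zeroLocus_eq_radical (K := K)]
  intro x hx
  have hx0 : x = 0 := eq_zero_of_forall_sum_mul_pow_eq_zero ha fun m hm1 hmn => by
    have := (mem_zeroLocus_iff.1 hx) _ (Ideal.subset_span ⟨⟨m - 1, by omega⟩, rfl⟩)
    simpa [weightedPowerSum, Nat.sub_add_cancel hm1] using this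
  simp [hx0]

end MvPolynomial

theorem intermediate_algebra_finiteType_isDomain (n : ℕ) (a : Fin n → ℂ)
    (ha : ∀ T : Finset (Fin n), T.Nonempty → ∑ i ∈ T, a i ≠ 0)
    (B : Subalgebra ℂ (MvPolynomial (Fin n) ℂ))
    (hB : Algebra.adjoin ℂ {p : MvPolynomial (Fin n) ℂ |
        ∃ m : ℕ, 1 ≤ m ∧ p = ∑ i, MvPolynomial.C (a i) * MvPolynomial.X i ^ m} ≤ B) :
    Algebra.FiniteType ℂ B ∧ IsDomain B := by
  have hqB : ∀ j : Fin (Fintype.card (Fin n)), MvPolynomial.weightedPowerSum a (j + 1) ∈ B :=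
    fun j => hB (Algebra.subset_adjoin ⟨j + 1, Nat.le_add_left _ _, rfl⟩)
  have : Module.Finite B (MvPolynomial (Fin n) ℂ) :=
    MvPolynomial.module_finite_of_X_mem_radical B
      (fun _ => MvPolynomial.isHomogeneous_weightedPowerSum a _) (fun _ => Nat.succ_pos _) hqB
      (MvPolynomial.X_mem_radical_span_weightedPowerSum ha)
  exact ⟨B.finiteType_of_finite, inferInstance⟩
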